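/- For a pseudo-multiplication ⊙, the set F_⊙ of ⊙-finite elements is either {0}, or [0,∞], or a half-open interval [0,φ) for some φ ∈ (1_⊙, ∞] satisfying O(φ) = φ. -/

import Mathlib

/-!
`O t ≤ 1 ⊙ t = t` and `O` is monotone, so `F_⊙` is a lower set containing `0`, and
`O(1) ⊙ t ≤ O t` puts `1` in `F_⊙` as soon as some `t ≠ 0` is there. Continuity of `x ↦ s ⊙ x`
makes `F_⊙` open to the right at every `0 < t < ∞` (`O t' ≤ O (s ⊙ t') ≤ O t` once `s ⊙ t' < t`),
so unless `F_⊙` is `{0}` or `[0, ∞]` its supremum `φ` is not attained and `F_⊙ = [0, φ)`.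
Finally `O t ≤ O (O t)`, so `O φ < φ` would give `O (O φ) = 0`, hence `O φ = 0`, i.e. `φ ∈ F_⊙`.
-/

open Set Filter Topology
open scoped ENNReal

/-- A pseudo-multiplication on `[0,∞]`. -/
structure PseudoMul where
  mul : ℝ≥0∞ → ℝ≥0∞ → ℝ≥0∞
  assoc : ∀ a b c, mul (mul a b) c = mul a (mul b c)
  continuousOn : ContinuousOn (fun p : ℝ≥0∞ × ℝ≥0∞ => mul p.1 p.2) (Ioo 0 ⊤ ×ˢ univ)
  continuousOn_left : ∀ t, ContinuousOn (fun s => mul s t) (Ioi 0)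
  mono : ∀ ⦃a b : ℝ≥0∞⦄, a ≤ b → ∀ ⦃c d : ℝ≥0∞⦄, c ≤ d → mul a c ≤ mul b d
  one : ℝ≥0∞
  one_mul : ∀ t, mul one t = t
  eq_zero_of_mul : ∀ s t, mul s t = 0 → s = 0 ∨ t = 0
  zero_mul : ∀ t, mul 0 t = 0
  mul_zero : ∀ t, mul t 0 = 0

/-- The kernel `O(t) = ⨅_{s>0} s ⊙ t`. -/
noncomputable def PseudoMul.O (P : PseudoMul) (t : ℝ≥0∞) : ℝ≥0∞ :=
  ⨅ s ∈ Ioi (0 : ℝ≥0∞), P.mul s t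

theorem IsLowerSet.eq_Iio_sSup {α : Type*} [CompleteLinearOrder α] {s : Set α}
    (hs : IsLowerSet s) (hsup : sSup s ∉ s) : s = Iio (sSup s) := by
  ext t
  refine ⟨fun ht => (le_sSup ht).lt_of_ne fun h => hsup (h ▸ ht), fun ht => ?_⟩
  obtain ⟨u, hu, htu⟩ := lt_sSup_iff.1 ht
  exact hs htu.le hu

namespace PseudoMul

variable (P : PseudoMul)

theorem one_ne_zero : P.one ≠ 0 := fun h =>
  zero_ne_one (by simpa only [h, P.zero_mul] using P.one_mul 1)

theorem mul_ne_zero {s t : ℝ≥0∞} (hs : s ≠ 0) (ht : t ≠ 0) : P.mul s t ≠ 0 := fun h =>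
  (P.eq_zero_of_mul s t h).elim hs ht

theorem continuous_mul_left {s : ℝ≥0∞} (hs₀ : s ≠ 0) (hs : s ≠ ⊤) :
    Continuous fun x => P.mul s x :=
  P.continuousOn.comp_continuous (continuous_const.prodMk continuous_id) fun _ =>
    ⟨⟨pos_iff_ne_zero.2 hs₀, lt_top_iff_ne_top.2 hs⟩, mem_univ _⟩

/-- Joint continuity is only assumed for `s < ⊤`; shrinking `s` gets there. -/
theorem exists_le_continuous_mul_left {s : ℝ≥0∞} (hs : s ≠ 0) :
    ∃ s' ≠ 0, s' ≤ s ∧ Continuous fun x => P.mul s' x := by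
  have hmin : min s 1 ≠ 0 := (lt_min (pos_iff_ne_zero.2 hs) zero_lt_one).ne'
  exact ⟨min s 1, hmin, min_le_left s 1,
    P.continuous_mul_left hmin ((min_le_right s 1).trans_lt ENNReal.one_lt_top).ne⟩

theorem O_le_mul {s : ℝ≥0∞} (hs : s ≠ 0) (t : ℝ≥0∞) : P.O t ≤ P.mul s t :=
  iInf₂_le s (pos_iff_ne_zero.2 hs)

theorem O_le_self (t : ℝ≥0∞) : P.O t ≤ t :=
  (P.O_le_mul P.one_ne_zero t).trans_eq (P.one_mul t)

theorem O_zero : P.O 0 = 0 :=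
  le_antisymm (P.O_le_self 0) zero_le

theorem O_mono : Monotone P.O := fun _ _ h =>
  le_iInf₂ fun _ hs => (P.O_le_mul hs.ne' _).trans (P.mono le_rfl h)

theorem isLowerSet_setOf_O_eq_zero : IsLowerSet {t | P.O t = 0} := fun _ _ hab hb =>
  le_antisymm (hb ▸ P.O_mono hab) zero_le

theorem O_le_O_mul {s : ℝ≥0∞} (hs : s ≠ 0) (u : ℝ≥0∞) : P.O u ≤ P.O (P.mul s u) :=
  le_iInf₂ fun r hr => P.assoc r s u ▸ P.O_le_mul (P.mul_ne_zero hr.ne' hs) u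

theorem mul_O_one_le (t : ℝ≥0∞) : P.mul (P.O P.one) t ≤ P.O t :=
  le_iInf₂ fun s hs => calc
    P.mul (P.O P.one) t ≤ P.mul (P.mul s P.one) t := P.mono (P.O_le_mul hs.ne' _) le_rfl
    _ = P.mul s t := by rw [P.assoc, P.one_mul]

theorem O_one_eq_zero {t : ℝ≥0∞} (ht : t ≠ 0) (hOt : P.O t = 0) : P.O P.one = 0 :=
  (P.eq_zero_of_mul _ t (le_zero_iff.1 (hOt ▸ P.mul_O_one_le t))).resolve_right ht

theorem O_le_mul_O {s : ℝ≥0∞} (hs : s ≠ 0) (t : ℝ≥0∞) : P.O t ≤ P.mul s (P.O t) := by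
  obtain ⟨s', hs', hs's, hcont⟩ := P.exists_le_continuous_mul_left hs
  refine le_trans ?_ (P.mono hs's le_rfl)
  have hcomm : P.mul s' (P.O t) = sInf ((P.mul s' ·) '' ((P.mul · t) '' Ioi 0)) := by
    rw [PseudoMul.O, ← sInf_image]
    exact Monotone.map_csInf_of_continuousAt hcont.continuousAt (fun _ _ h => P.mono le_rfl h)
      ⟨_, _, mem_Ioi.2 zero_lt_one, rfl⟩
  rw [hcomm]
  refine le_sInf ?_
  rintro _ ⟨_, ⟨r, hr, rfl⟩, rfl⟩
  exact (P.O_le_mul (P.mul_ne_zero hs' hr.ne') t).trans_eq (P.assoc s' r t)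

theorem O_le_O_O (t : ℝ≥0∞) : P.O t ≤ P.O (P.O t) :=
  le_iInf₂ fun _ hs => P.O_le_mul_O hs.ne' t

theorem exists_gt_O_eq_zero {t : ℝ≥0∞} (ht₀ : t ≠ 0) (htop : t ≠ ⊤) (hO : P.O t = 0) :
    ∃ t' > t, P.O t' = 0 := by
  obtain ⟨s, hs, hst⟩ : ∃ s ∈ Ioi (0 : ℝ≥0∞), P.mul s t < t := by
    have hlt : P.O t < t := hO ▸ pos_iff_ne_zero.2 ht₀
    obtain ⟨s, hs⟩ := iInf_lt_iff.1 hlt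
    obtain ⟨hs, hst⟩ := iInf_lt_iff.1 hs
    exact ⟨s, hs, hst⟩
  obtain ⟨s', hs', hs's, hcont⟩ := P.exists_le_continuous_mul_left hs.ne'
  have hnhds : {x | P.mul s' x < t} ∈ 𝓝[>] t :=
    mem_nhdsWithin_of_mem_nhds <| hcont.continuousAt.preimage_mem_nhds
      (Iio_mem_nhds ((P.mono hs's le_rfl).trans_lt hst))
  have : (𝓝[>] t).NeBot := nhdsGT_neBot_of_exists_gt ⟨⊤, lt_top_iff_ne_top.2 htop⟩
  obtain ⟨t', ht'⟩ := Filter.nonempty_of_mem (inter_mem hnhds self_mem_nhdsWithin)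
  refine ⟨t', ht'.2, le_antisymm ?_ zero_le⟩
  calc P.O t' ≤ P.O (P.mul s' t') := P.O_le_O_mul hs' t'
    _ ≤ P.O t := P.O_mono ht'.1.le
    _ = 0 := hO

theorem O_sSup_ne_zero {t₀ : ℝ≥0∞} (ht₀ : t₀ ≠ 0) (hOt₀ : P.O t₀ = 0)
    (htop : P.O ⊤ ≠ 0) :
    P.O (sSup {t | P.O t = 0}) ≠ 0 := fun hφ => by
  have hφ₀ : sSup {t | P.O t = 0} ≠ 0 := ne_bot_of_le_ne_bot ht₀ (le_sSup hOt₀)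
  obtain ⟨t', ht', hOt'⟩ := P.exists_gt_O_eq_zero hφ₀ (fun h => htop (h ▸ hφ)) hφ
  exact (le_sSup (show t' ∈ {t | P.O t = 0} from hOt')).not_gt ht'

theorem O_eq_self_of_Iio {φ : ℝ≥0∞} (hφ : P.O φ ≠ 0) (hlt : ∀ t < φ, P.O t = 0) :
    P.O φ = φ := by
  refine (P.O_le_self φ).antisymm (not_lt.1 fun hOφ => hφ ?_)
  exact le_zero_iff.1 ((P.O_le_O_O φ).trans_eq (hlt _ hOφ))

end PseudoMul

theorem finite_set_trichotomy (P : PseudoMul) :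
    {t : ℝ≥0∞ | P.O t = 0} = {0} ∨
    {t : ℝ≥0∞ | P.O t = 0} = univ ∨
    ∃ φ : ℝ≥0∞, P.one < φ ∧ P.O φ = φ ∧ {t : ℝ≥0∞ | P.O t = 0} = Iio φ := by
  have hF := P.isLowerSet_setOf_O_eq_zero
  by_cases htop : P.O ⊤ = 0
  · exact Or.inr (Or.inl (hF.top_mem.1 htop))
  by_cases hzero : ∀ t, P.O t = 0 → t = 0
  · exact Or.inl (Set.ext fun t => ⟨hzero t, fun ht => ht ▸ P.O_zero⟩)
  push Not at hzero
  obtain ⟨t₀, hOt₀, ht₀⟩ := hzero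
  have hφ := P.O_sSup_ne_zero ht₀ hOt₀ htop
  have hIio := hF.eq_Iio_sSup hφ
  refine Or.inr (Or.inr ⟨_, ?_, P.O_eq_self_of_Iio hφ fun t ht => ?_, hIio⟩)
  · exact hIio.le (P.O_one_eq_zero ht₀ hOt₀)
  · exact hIio.ge ht
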